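/- arXiv:1806.01075 — 4 statements merged into one kernel-verified Lean document; each statement's English description precedes it below -/
import Mathlib

section
/- Let G ⊆ ℝⁿ × ℝ be an open set and F : ℝⁿ × ℝ → Set ℝⁿ a set-valued map that is upper semicontinuous on G and such that for every (x,t) ∈ G the set F(x,t) is nonempty, compact and convex. Then for every point (x₀,t₀) ∈ G there exists t₁ > t₀ and a solution x of the differential inclusion ẋ ∈ F(x,t) on [t₀,t₁] with x(t₀) = x₀ and (x(t),t) ∈ G for all t ∈ [t₀,t₁]. -/
/-!
Near `(x₀, t₀)` upper semicontinuity bounds `F`, so some bounded `f` has `f (x, t) ∈ F (x, t)`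
there, and the Euler polygons of `f` with steps `1 / (N + 1)` are uniformly Lipschitz. By
Arzelà–Ascoli a subsequence converges uniformly to a Lipschitz `x`, which is the integral of its
a.e. derivative. Where `x` is differentiable, its difference quotients are limits of averages of
Euler velocities, i.e. of values of `F` at nearby points of the graph; by upper semicontinuity these
lie in the closed convex `ε`-neighbourhood of `F (x t, t)`, hence so does `ẋ t`, for every `ε > 0`.
-/

open MeasureTheory Set Filter

noncomputable section

/-- `ℝⁿ` as a Euclidean space. -/
abbrev En (n : ℕ) := EuclideanSpace ℝ (Fin n)

/-- `x` is a solution of the differential inclusion `ẋ ∈ F (x, t)` on the time interval `I`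
(containing `t₀`): there is a locally integrable `v` with
`x t = x t₀ + ∫_{t₀}^t v` on `I` and `v t ∈ F (x t) t` for a.e. `t ∈ I`. -/
def IsDISolution {n : ℕ} (F : En n → ℝ → Set (En n)) (I : Set ℝ) (t₀ : ℝ)
    (x : ℝ → En n) : Prop :=
  ∃ v : ℝ → En n, LocallyIntegrable v volume ∧
    (∀ t ∈ I, x t = x t₀ + ∫ s in t₀..t, v s) ∧
    (∀ᵐ t ∂(volume.restrict I), v t ∈ F (x t) t)

/-- `F` is upper semicontinuous on `G`: at every point `p ∈ G`, the one-sided Hausdorff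
excess `β(F q, F p) = sup_{w ∈ F q} dist (w, F p)` tends to `0` as `q → p`. -/
def USCOn {n : ℕ} (F : En n → ℝ → Set (En n)) (G : Set (En n × ℝ)) : Prop :=
  ∀ p ∈ G, ∀ ε > 0, ∃ δ > 0, ∀ q : En n × ℝ, dist q p < δ →
    ∀ w ∈ F q.1 q.2, Metric.infDist w (F p.1 p.2) < ε

open Metric Topology intervalIntegral

variable {E : Type*} [NormedAddCommGroup E]

theorem locallyIntegrable_of_norm_le {X : Type*} [MeasurableSpace X] [TopologicalSpace X]
    {μ : Measure X} [IsLocallyFiniteMeasure μ] {g : X → E} (hg : AEStronglyMeasurable g μ)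
    {C : ℝ} (hC : ∀ x, ‖g x‖ ≤ C) : LocallyIntegrable g μ :=
  (locallyIntegrable_const C).mono hg (ae_of_all _ fun x => (hC x).trans (le_abs_self C))

theorem exists_bounded_selection {α : Type*} {S : Set α} {Φ : α → Set E} {M : ℝ} (hM : 0 ≤ M)
    (hne : ∀ q ∈ S, (Φ q).Nonempty) (hΦ : ∀ q ∈ S, ∀ w ∈ Φ q, ‖w‖ ≤ M) :
    ∃ sel : α → E, (∀ q, ‖sel q‖ ≤ M) ∧ ∀ q ∈ S, sel q ∈ Φ q := by
  classical
  refine ⟨fun q => if hq : q ∈ S then (hne q hq).some else 0, fun q => ?_, fun q hq => ?_⟩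
  · by_cases hq : q ∈ S
    · simpa [hq] using hΦ q hq _ (hne q hq).some_mem
    · simpa [hq] using hM
  · simpa [hq] using (hne q hq).some_mem

variable [NormedSpace ℝ E]

theorem lipschitzWith_intervalIntegral {g : ℝ → E} (hg : LocallyIntegrable g volume) {K : NNReal}
    (hK : ∀ t, ‖g t‖ ≤ K) (a : ℝ) : LipschitzWith K fun x => ∫ t in a..x, g t := by
  have hgi (x y : ℝ) : IntervalIntegrable g volume x y :=
    (hg.integrableOn_isCompact isCompact_uIcc).intervalIntegrable
  refine LipschitzWith.of_dist_le_mul fun x y => ?_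
  rw [dist_eq_norm, integral_interval_sub_left (hgi _ _) (hgi _ _), Real.dist_eq]
  exact norm_integral_le_of_norm_le_const fun t _ => hK t

theorem LipschitzWith.locallyIntegrable_deriv [FiniteDimensional ℝ E] {K : NNReal} {f : ℝ → E}
    (hf : LipschitzWith K f) : LocallyIntegrable (deriv f) volume := by
  borelize E
  exact locallyIntegrable_of_norm_le (measurable_deriv f).aestronglyMeasurable
    fun t => norm_deriv_le_of_lipschitz hf

/-- By Rademacher's and Lebesgue's differentiation theorems, `f - ∫ deriv f` is Lipschitz with
derivative `0` almost everywhere, hence constant. -/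
theorem LipschitzWith.integral_deriv_eq_sub [FiniteDimensional ℝ E] {K : NNReal} {f : ℝ → E}
    (hf : LipschitzWith K f) (a b : ℝ) : ∫ t in a..b, deriv f t = f b - f a := by
  have hderiv := hf.locallyIntegrable_deriv
  have hg : LipschitzWith (K + K) fun x => f x - ∫ t in a..x, deriv f t :=
    hf.sub (lipschitzWith_intervalIntegral hderiv (fun t => norm_deriv_le_of_lipschitz hf) a)
  obtain ⟨C, hC⟩ := (hg.lipschitzOnWith (s := uIcc a b)).absolutelyContinuousOnInterval
    |>.const_of_ae_hasDerivAt_zero <| by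
      filter_upwards [hf.ae_differentiableAt, LocallyIntegrable.ae_hasDerivAt_integral hderiv]
        with x hfx hIx _
      exact sub_self (deriv f x) ▸ hfx.hasDerivAt.sub (hIx a)
  have hCa : f a = C := by simpa using hC a left_mem_uIcc
  have hCb := hC b right_mem_uIcc
  rw [← hCa] at hCb
  rw [← hCb, sub_sub_cancel]

theorem isCompact_setOf_lipschitzWith_apply_eq {X Y : Type*} [PseudoMetricSpace X]
    [CompactSpace X] [MetricSpace Y] [ProperSpace Y] (K : NNReal) (p : X) (y : Y) :
    IsCompact {f : C(X, Y) | LipschitzWith K f ∧ f p = y} := by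
  have hpointwise : ContinuousMap.toFun '' {f : C(X, Y) | LipschitzWith K f ∧ f p = y} =
      {g : X → Y | LipschitzWith K g ∧ g p = y} := by
    ext g
    refine ⟨?_, fun hg => ⟨⟨g, hg.1.continuous⟩, hg, rfl⟩⟩
    rintro ⟨f, hf, rfl⟩
    exact hf
  refine ArzelaAscoli.isCompact_of_equicontinuous _ ?_
    (LipschitzWith.uniformEquicontinuous _ K fun f => f.2.1).equicontinuous
  rw [hpointwise]
  refine (isCompact_univ_pi fun _ => isCompact_closedBall y (K * diam (univ : Set X)))
    |>.of_isClosed_subset ((isClosed_setOfPred_lipschitzWith K).inter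
      (isClosed_eq (continuous_apply p) continuous_const)) fun g hg x _ => ?_
  rw [mem_closedBall, ← hg.2]
  exact (hg.1.dist_le_mul x p).trans <| mul_le_mul_of_nonneg_left
    (dist_le_diam_of_mem isCompact_univ.isBounded (mem_univ _) (mem_univ _)) K.2

theorem exists_lipschitzWith_subseq_tendstoUniformlyOn_Icc {Y : Type*} [MetricSpace Y]
    [ProperSpace Y] {K : NNReal} {u : ℕ → ℝ → Y} (hu : ∀ N, LipschitzWith K (u N)) {a b : ℝ}
    (hab : a ≤ b) {y : Y} (hy : ∀ N, u N a = y) :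
    ∃ x : ℝ → Y, LipschitzWith K x ∧ x a = y ∧
      ∃ φ : ℕ → ℕ, StrictMono φ ∧ TendstoUniformlyOn (fun j => u (φ j)) x atTop (Icc a b) := by
  let U (N : ℕ) : C(Icc a b, Y) := ⟨(Icc a b).domRestrict (u N), ((hu N).restrict _).continuous⟩
  have hU (N : ℕ) : LipschitzWith K (U N) ∧ U N ⟨a, left_mem_Icc.2 hab⟩ = y :=
    ⟨(hu N).restrict _, hy N⟩
  obtain ⟨X, ⟨hXlip, hXa⟩, φ, hφ, hUX⟩ :=
    (isCompact_setOf_lipschitzWith_apply_eq K _ y).tendsto_subseq hU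
  refine ⟨X ∘ projIcc a b hab, by simpa using hXlip.comp (LipschitzWith.projIcc hab), ?_, φ, hφ, ?_⟩
  · simpa [projIcc_left] using hXa
  · rw [tendstoUniformlyOn_iff_tendstoUniformly_comp_coe]
    convert ContinuousMap.tendsto_iff_tendstoUniformly.1 hUX using 1
    · rfl
    · funext s
      simp

theorem LipschitzWith.mem_closedBall_graph {Y : Type*} [PseudoMetricSpace Y] {x : ℝ → Y}
    {K : NNReal} (hx : LipschitzWith K x) {t₀ a r t : ℝ} (hKa : K * a ≤ r) (ha : a ≤ r)
    (ht : t ∈ Icc t₀ (t₀ + a)) : (x t, t) ∈ closedBall (x t₀, t₀) r := by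
  have hdt : dist t t₀ ≤ a := by
    rw [Real.dist_eq, abs_of_nonneg (by linarith [ht.1])]
    linarith [ht.2]
  rw [mem_closedBall, Prod.dist_eq]
  exact max_le ((hx.dist_le_mul t t₀).trans ((mul_le_mul_of_nonneg_left hdt K.2).trans hKa))
    (hdt.trans ha)

/-- Approximate solutions of `ẋ ∈ Φ (x, t)` on `[t₀, T]` with delays `h N → 0`: the velocity of
`u N` at `s` lies in `Φ` taken at a point of the graph of `u N` at most `h N` earlier. -/
structure IsApproxSolutionSeq (Φ : E × ℝ → Set E) (u v : ℕ → ℝ → E) (h : ℕ → ℝ) (t₀ T : ℝ) :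
    Prop where
  tendsto_delay : Tendsto h atTop (𝓝 0)
  locallyIntegrable_velocity : ∀ N, LocallyIntegrable (v N) volume
  sub_eq_integral : ∀ N s s', u N s' - u N s = ∫ r in s..s', v N r
  exists_velocity_mem :
    ∀ N, ∀ s ∈ Icc t₀ T, ∃ τ ∈ Icc t₀ s, s - h N ≤ τ ∧ v N s ∈ Φ (u N τ, τ)

namespace IsApproxSolutionSeq

variable {Φ : E × ℝ → Set E} {u v : ℕ → ℝ → E} {h : ℕ → ℝ} {t₀ T : ℝ}

theorem comp_tendsto (hA : IsApproxSolutionSeq Φ u v h t₀ T) {φ : ℕ → ℕ}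
    (hφ : Tendsto φ atTop atTop) : IsApproxSolutionSeq Φ (u ∘ φ) (v ∘ φ) (h ∘ φ) t₀ T where
  tendsto_delay := hA.tendsto_delay.comp hφ
  locallyIntegrable_velocity N := hA.locallyIntegrable_velocity (φ N)
  sub_eq_integral N := hA.sub_eq_integral (φ N)
  exists_velocity_mem N := hA.exists_velocity_mem (φ N)

theorem mem_of_hasDerivAt [CompleteSpace E] (hA : IsApproxSolutionSeq Φ u v h t₀ T) {x : ℝ → E}
    (hux : TendstoUniformlyOn u x atTop (Icc t₀ T)) {t : ℝ} {d : E} (hx : HasDerivAt x d t)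
    (ht : t ∈ Ico t₀ T) {C : Set E} (hC : Convex ℝ C) (hCc : IsClosed C) {δ : ℝ} (hδ : 0 < δ)
    (hΦ : ∀ q, dist q (x t, t) < δ → Φ q ⊆ C) : d ∈ C := by
  obtain ⟨ρ, hρ, hρδ⟩ : ∃ ρ > 0, ∀ τ, dist τ t < ρ → dist (x τ, τ) (x t, t) < δ / 2 :=
    Metric.continuousAt_iff.1 (hx.continuousAt.prodMk continuousAt_id) _ (half_pos hδ)
  have hvC : ∀ᶠ N in atTop, ∀ s ∈ Icc t₀ T, dist s t < ρ / 2 → v N s ∈ C := by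
    filter_upwards [hA.tendsto_delay.eventually (gt_mem_nhds (half_pos hρ)),
      Metric.tendstoUniformlyOn_iff.1 hux _ (half_pos hδ)] with N hhN huN s hs hst
    obtain ⟨τ, hτ, hsτ, hvτ⟩ := hA.exists_velocity_mem N s hs
    refine hΦ _ ?_ hvτ
    have hτt : dist τ t < ρ := by
      rw [Real.dist_eq, abs_lt] at hst ⊢
      constructor <;> linarith [hτ.2]
    calc dist (u N τ, τ) (x t, t) ≤ dist (u N τ, τ) (x τ, τ) + dist (x τ, τ) (x t, t) :=
          dist_triangle _ _ _
      _ < δ / 2 + δ / 2 := by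
          refine add_lt_add ?_ (hρδ τ hτt)
          simpa [Prod.dist_eq, dist_comm] using huN τ ⟨hτ.1, hτ.2.trans hs.2⟩
      _ = δ := add_halves δ
  have hslope : Tendsto (slope x t) (𝓝[>] t) (𝓝 d) :=
    (hasDerivAt_iff_tendsto_slope.1 hx).mono_left (nhdsWithin_mono _ fun s hs => ne_of_gt hs)
  refine hCc.mem_of_tendsto hslope ?_
  filter_upwards [Ioo_mem_nhdsGT (lt_min ht.2 (lt_add_of_pos_right t (half_pos hρ)))]
    with s hs
  have hsT : s ∈ Icc t₀ T := ⟨ht.1.trans hs.1.le, hs.2.le.trans (min_le_left _ _)⟩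
  refine hCc.mem_of_tendsto (f := fun N => slope (u N) t s) ?_ (hvC.mono fun N hN => ?_)
  · simp only [slope_def_module]
    exact ((hux.tendsto_at hsT).sub (hux.tendsto_at (Ico_subset_Icc_self ht))).const_smul _
  · rw [slope_def_module, hA.sub_eq_integral N t s, ← interval_average_eq, uIoc_of_le hs.1.le]
    refine hC.set_average_mem hCc (by simp [hs.1]) (by simp) ?_
      ((hA.locallyIntegrable_velocity N).integrableOn_isCompact isCompact_Icc
        |>.mono_set Ioc_subset_Icc_self)
    refine (ae_restrict_mem measurableSet_Ioc).mono fun r hr => hN r ?_ ?_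
    · exact ⟨ht.1.trans hr.1.le, hr.2.trans hsT.2⟩
    · rw [Real.dist_eq, abs_of_pos (sub_pos.2 hr.1)]
      linarith [hr.2, hs.2.trans_le (min_le_right _ _)]

end IsApproxSolutionSeq

section Euler

variable (f : E × ℝ → E) (x₀ : E) (t₀ h : ℝ)

def eulerNode : ℕ → E
  | 0 => x₀
  | i + 1 => eulerNode i + h • f (eulerNode i, t₀ + i * h)

def eulerIndex (t : ℝ) : ℕ := ⌊(t - t₀) / h⌋₊

def eulerVelocity (t : ℝ) : E :=
  f (eulerNode f x₀ t₀ h (eulerIndex t₀ h t), t₀ + eulerIndex t₀ h t * h)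

def eulerPolygon (t : ℝ) : E := x₀ + ∫ s in t₀..t, eulerVelocity f x₀ t₀ h s

variable {f x₀ t₀ h} {M : NNReal}

theorem eulerIndex_eq_of_mem_Ico (hh : 0 < h) {i : ℕ} {t : ℝ}
    (ht : t ∈ Ico (t₀ + i * h) (t₀ + (i + 1) * h)) : eulerIndex t₀ h t = i := by
  rw [eulerIndex, Nat.floor_eq_iff (div_nonneg (by nlinarith [ht.1]) hh.le), le_div_iff₀ hh,
    div_lt_iff₀ hh]
  constructor <;> linarith [ht.1, ht.2]

@[simp]
theorem eulerPolygon_self : eulerPolygon f x₀ t₀ h t₀ = x₀ := by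
  simp [eulerPolygon]

theorem locallyIntegrable_eulerVelocity (hf : ∀ q, ‖f q‖ ≤ M) :
    LocallyIntegrable (eulerVelocity f x₀ t₀ h) volume := by
  have hmeas : StronglyMeasurable (eulerVelocity f x₀ t₀ h) :=
    (StronglyMeasurable.of_discrete (f := fun i : ℕ => f (eulerNode f x₀ t₀ h i, t₀ + i * h)))
      |>.comp_measurable ((measurable_id.sub_const t₀).div_const h).nat_floor
  exact locallyIntegrable_of_norm_le hmeas.aestronglyMeasurable fun t => hf _

theorem lipschitzWith_eulerPolygon (hf : ∀ q, ‖f q‖ ≤ M) :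
    LipschitzWith M (eulerPolygon f x₀ t₀ h) :=
  zero_add M ▸ (LipschitzWith.const x₀).add
    (lipschitzWith_intervalIntegral (locallyIntegrable_eulerVelocity hf) (fun _ => hf _) t₀)

theorem eulerPolygon_sub_eulerPolygon (hf : ∀ q, ‖f q‖ ≤ M) (s t : ℝ) :
    eulerPolygon f x₀ t₀ h t - eulerPolygon f x₀ t₀ h s =
      ∫ r in s..t, eulerVelocity f x₀ t₀ h r := by
  have hv (a b : ℝ) : IntervalIntegrable (eulerVelocity f x₀ t₀ h) volume a b :=
    (locallyIntegrable_eulerVelocity hf |>.integrableOn_isCompact isCompact_uIcc).intervalIntegrable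
  simp only [eulerPolygon, add_sub_add_left_eq_sub]
  exact integral_interval_sub_left (hv _ _) (hv _ _)

variable [CompleteSpace E]

theorem eulerPolygon_node (hh : 0 < h) (hf : ∀ q, ‖f q‖ ≤ M) (i : ℕ) :
    eulerPolygon f x₀ t₀ h (t₀ + i * h) = eulerNode f x₀ t₀ h i := by
  induction i with
  | zero => simp [eulerNode]
  | succ i ih =>
    have hle : t₀ + i * h ≤ t₀ + (i + 1 : ℕ) * h := by push_cast; linarith
    have hstep : ∫ r in (t₀ + i * h)..(t₀ + (i + 1 : ℕ) * h), eulerVelocity f x₀ t₀ h r =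
        h • f (eulerNode f x₀ t₀ h i, t₀ + i * h) := by
      rw [integral_of_le hle, ← integral_Ico_eq_integral_Ioc,
        setIntegral_congr_fun measurableSet_Ico fun s hs => by
          rw [eulerVelocity, eulerIndex_eq_of_mem_Ico hh (by exact_mod_cast hs)],
        setIntegral_const, Real.volume_real_Ico_of_le hle]
      congr 1
      push_cast
      ring
    rw [eulerNode, ← hstep, ← ih, ← eulerPolygon_sub_eulerPolygon hf, add_sub_cancel]

theorem exists_eulerVelocity_eq (hh : 0 < h) (hf : ∀ q, ‖f q‖ ≤ M) {s : ℝ} (hs : t₀ ≤ s) :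
    ∃ τ ∈ Icc t₀ s, s - h ≤ τ ∧ eulerVelocity f x₀ t₀ h s = f (eulerPolygon f x₀ t₀ h τ, τ) := by
  have hle := Nat.floor_le (div_nonneg (sub_nonneg.2 hs) hh.le)
  have hlt := Nat.lt_floor_add_one ((s - t₀) / h)
  rw [le_div_iff₀ hh] at hle
  rw [div_lt_iff₀ hh] at hlt
  refine ⟨t₀ + eulerIndex t₀ h s * h, ⟨?_, ?_⟩, ?_, ?_⟩
  · have : (0 : ℝ) ≤ eulerIndex t₀ h s * h := by positivity
    linarith
  · rw [eulerIndex]; linarith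
  · rw [eulerIndex]; linarith
  · rw [eulerPolygon_node hh hf, eulerVelocity]

theorem isApproxSolutionSeq_eulerPolygon {Φ : E × ℝ → Set E} {r a : ℝ} {δ : ℕ → ℝ}
    (hf : ∀ q, ‖f q‖ ≤ M) (hfΦ : ∀ q ∈ closedBall (x₀, t₀) r, f q ∈ Φ q) (hMa : M * a ≤ r)
    (har : a ≤ r) (hδ : ∀ N, 0 < δ N) (hδ₀ : Tendsto δ atTop (𝓝 0)) :
    IsApproxSolutionSeq Φ (fun N => eulerPolygon f x₀ t₀ (δ N))
      (fun N => eulerVelocity f x₀ t₀ (δ N)) δ t₀ (t₀ + a) where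
  tendsto_delay := hδ₀
  locallyIntegrable_velocity _ := locallyIntegrable_eulerVelocity hf
  sub_eq_integral _ := eulerPolygon_sub_eulerPolygon hf
  exists_velocity_mem N s hs := by
    obtain ⟨τ, hτ, hsτ, hvτ⟩ := exists_eulerVelocity_eq (x₀ := x₀) (hδ N) hf hs.1
    refine ⟨τ, hτ, hsτ, hvτ ▸ hfΦ _ ?_⟩
    simpa using (lipschitzWith_eulerPolygon (x₀ := x₀) (t₀ := t₀) (h := δ N) hf)
      |>.mem_closedBall_graph hMa har ⟨hτ.1, hτ.2.trans hs.2⟩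

end Euler

namespace USCOn

variable {n : ℕ} {F : En n → ℝ → Set (En n)} {G : Set (En n × ℝ)} {p : En n × ℝ}

theorem exists_subset_cthickening (hF : USCOn F G) (hp : p ∈ G) (hne : (F p.1 p.2).Nonempty)
    {ε : ℝ} (hε : 0 < ε) :
    ∃ δ > 0, ∀ q, dist q p < δ → F q.1 q.2 ⊆ cthickening ε (F p.1 p.2) := by
  obtain ⟨δ, hδ, hδε⟩ := hF p hp ε hε
  exact ⟨δ, hδ, fun q hq w hw => thickening_subset_cthickening _ _
    ((mem_thickening_iff_infDist_lt hne).2 (hδε q hq w hw))⟩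

theorem exists_closedBall_norm_le (hF : USCOn F G) (hG : IsOpen G) (hp : p ∈ G)
    (hne : (F p.1 p.2).Nonempty) (hb : Bornology.IsBounded (F p.1 p.2)) :
    ∃ r > 0, ∃ M : NNReal, closedBall p r ⊆ G ∧
      ∀ q ∈ closedBall p r, ∀ w ∈ F q.1 q.2, ‖w‖ ≤ M := by
  obtain ⟨r₀, hr₀, hr₀G⟩ := nhds_basis_closedBall.mem_iff.1 (hG.mem_nhds hp)
  obtain ⟨δ, hδ, hδF⟩ := hF.exists_subset_cthickening hp hne one_pos
  obtain ⟨R, hR⟩ := (hb.cthickening (δ := 1)).subset_closedBall 0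
  refine ⟨min r₀ (δ / 2), lt_min hr₀ (half_pos hδ), R.toNNReal,
    (closedBall_subset_closedBall (min_le_left _ _)).trans hr₀G, fun q hq w hw => ?_⟩
  have hqp : dist q p < δ :=
    (mem_closedBall.1 hq).trans_lt ((min_le_right _ _).trans_lt (half_lt_self hδ))
  simpa using (mem_closedBall_zero_iff.1 (hR (hδF q hqp hw))).trans (Real.le_coe_toNNReal R)

theorem mem_of_hasDerivAt (hF : USCOn F G) {u v : ℕ → ℝ → En n} {h : ℕ → ℝ} {t₀ T : ℝ}
    (hA : IsApproxSolutionSeq (fun q => F q.1 q.2) u v h t₀ T) {x : ℝ → En n}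
    (hux : TendstoUniformlyOn u x atTop (Icc t₀ T)) {t : ℝ} {d : En n} (hx : HasDerivAt x d t)
    (ht : t ∈ Ico t₀ T) (hG : (x t, t) ∈ G) (hne : (F (x t) t).Nonempty)
    (hcl : IsClosed (F (x t) t)) (hconv : Convex ℝ (F (x t) t)) : d ∈ F (x t) t := by
  rw [← hcl.closure_eq, closure_eq_iInter_cthickening, mem_iInter₂]
  intro ε hε
  obtain ⟨δ, hδ, hδε⟩ := hF.exists_subset_cthickening hG hne hε
  exact hA.mem_of_hasDerivAt hux hx ht (hconv.cthickening ε) isClosed_cthickening hδ hδε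

end USCOn

/-- **Local existence for differential inclusions** (Filippov). If `F` is upper
semicontinuous on an open set `G ⊆ ℝⁿ × ℝ` with nonempty compact convex values, then through
every point `(x₀, t₀) ∈ G` there is a local solution of `ẋ ∈ F (x, t)`, `x (t₀) = x₀`,
whose graph stays in `G`. -/
theorem stmt0 {n : ℕ} (G : Set (En n × ℝ)) (hG : IsOpen G)
    (F : En n → ℝ → Set (En n)) (hUSC : USCOn F G)
    (hne : ∀ p ∈ G, (F p.1 p.2).Nonempty)
    (hcpt : ∀ p ∈ G, IsCompact (F p.1 p.2))
    (hconv : ∀ p ∈ G, Convex ℝ (F p.1 p.2))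
    (x₀ : En n) (t₀ : ℝ) (h₀ : (x₀, t₀) ∈ G) :
    ∃ t₁ > t₀, ∃ x : ℝ → En n, x t₀ = x₀ ∧
      IsDISolution F (Set.Icc t₀ t₁) t₀ x ∧
      ∀ t ∈ Set.Icc t₀ t₁, (x t, t) ∈ G := by
  obtain ⟨r, hr, M, hrG, hM⟩ :=
    hUSC.exists_closedBall_norm_le hG h₀ (hne _ h₀) (hcpt _ h₀).isBounded
  obtain ⟨sel, hsel_le, hsel⟩ := exists_bounded_selection M.2 (fun q hq => hne q (hrG hq)) hM
  set a := r / (M + 1)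
  have ha : 0 < a := by positivity
  have hMa : M * a ≤ r ∧ a ≤ r := by
    have : a * (M + 1) = r := div_mul_cancel₀ r (by positivity)
    constructor <;> nlinarith [M.2]
  have hA := isApproxSolutionSeq_eulerPolygon (x₀ := x₀) (t₀ := t₀) hsel_le hsel hMa.1 hMa.2
    (fun N => Nat.one_div_pos_of_nat) tendsto_one_div_add_atTop_nhds_zero_nat
  obtain ⟨x, hxlip, hx₀, φ, hφ, hux⟩ := exists_lipschitzWith_subseq_tendstoUniformlyOn_Icc
    (u := fun N : ℕ => eulerPolygon sel x₀ t₀ (1 / (N + 1)))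
    (fun N => lipschitzWith_eulerPolygon hsel_le) (le_add_of_nonneg_right ha.le)
    (fun N => eulerPolygon_self)
  have hgraph t (ht : t ∈ Icc t₀ (t₀ + a)) : (x t, t) ∈ G := by
    have := hxlip.mem_closedBall_graph hMa.1 hMa.2 ht
    rw [hx₀] at this
    exact hrG this
  refine ⟨t₀ + a, by linarith, x, hx₀, ⟨deriv x, hxlip.locallyIntegrable_deriv,
    fun t _ => by rw [hxlip.integral_deriv_eq_sub]; abel, ?_⟩, hgraph⟩
  rw [← ae_restrict_congr_set Ico_ae_eq_Icc]
  filter_upwards [ae_restrict_of_ae hxlip.ae_differentiableAt, ae_restrict_mem measurableSet_Ico]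
    with t hdiff ht
  have hp := hgraph t (Ico_subset_Icc_self ht)
  exact hUSC.mem_of_hasDerivAt (hA.comp_tendsto hφ.tendsto_atTop) hux hdiff.hasDerivAt ht hp
    (hne _ hp) (hcpt _ hp).isClosed (hconv _ hp)
end
end

section
/- Fix constants l > 0, g > 0, μ > 0 and a Lipschitz continuous function a : ℝ → ℝ. For the pendulum right-hand side f(q,p,t) = (p, (a(t)/l)·sin q − (μ/l)·|a(t)·cos q − l·p² + g·sin q|·(p/|p|) − (g/l)·cos q) defined for p ≠ 0, and for any bounded region of (q,p,t)-space, there exists a constant L such that for all points (q₁,p₁,t) and (q₂,p₂,t) in the region with p₁ ≠ 0 and p₂ ≠ 0 one has ((q₁,p₁) − (q₂,p₂))·(f(q₁,p₁,t) − f(q₂,p₂,t)) ≤ L·|(q₁,p₁) − (q₂,p₂)|². -/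
open MeasureTheory Set Filter

noncomputable section

/-- The scalar right-hand side of the pendulum equation for the angular velocity, where
`s ∈ [-1, 1]` is the direction of the dry friction force:
`h (q, p, t, s) = (a t / l)·sin q − (μ / l)·|a t·cos q − l·p² + g·sin q|·s − (g / l)·cos q`. -/
def hRHS (l g μ : ℝ) (a : ℝ → ℝ) (q p t s : ℝ) : ℝ :=
  (a t / l) * Real.sin q - (μ / l) * |a t * Real.cos q - l * p ^ 2 + g * Real.sin q| * s
    - (g / l) * Real.cos q

/-- The pendulum set-valued map `Φ`: a singleton `{(p, h (q, p, t, p / |p|))}` for `p ≠ 0`,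
and the segment `{(0, h (q, 0, t, s)) : s ∈ [−1, 1]}` for `p = 0`. -/
def Phi (l g μ : ℝ) (a : ℝ → ℝ) (q p t : ℝ) : Set (ℝ × ℝ) :=
  if p ≠ 0 then {(p, hRHS l g μ a q p t (p / |p|))}
  else {v : ℝ × ℝ | ∃ s ∈ Set.Icc (-1 : ℝ) 1, v = (0, hRHS l g μ a q 0 t s)}

/-- The single-valued pendulum right-hand side, defined for `p ≠ 0`. -/
def pendf (l g μ : ℝ) (a : ℝ → ℝ) (q p t : ℝ) : ℝ × ℝ :=
  (p, hRHS l g μ a q p t (p / |p|))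

lemma sin_lip (x y : ℝ) : |Real.sin x - Real.sin y| ≤ |x - y| := by
  rw [Real.sin_sub_sin, abs_mul, abs_mul, abs_two]
  have h1 := Real.abs_sin_le_abs (x := (x - y) / 2)
  have h2 := Real.abs_cos_le_one ((x + y) / 2)
  have h3 := abs_nonneg (Real.sin ((x - y) / 2))
  have h4 : |(x - y) / 2| = |x - y| / 2 := by rw [abs_div]; simp
  nlinarith

lemma cos_lip (x y : ℝ) : |Real.cos x - Real.cos y| ≤ |x - y| := by
  rw [Real.cos_sub_cos, abs_mul, abs_mul, abs_neg, abs_two]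
  have h1 := Real.abs_sin_le_abs (x := (x - y) / 2)
  have h2 := Real.abs_sin_le_one ((x + y) / 2)
  have h3 := abs_nonneg (Real.sin ((x - y) / 2))
  have h4 : |(x - y) / 2| = |x - y| / 2 := by rw [abs_div]; simp
  nlinarith

lemma friction_key (c A₁ A₂ p₁ p₂ : ℝ) (hc : 0 ≤ c)
    (h₁ : p₁ ≠ 0) (h₂ : p₂ ≠ 0) :
    -(c * (p₁ - p₂) * (|A₁| * (p₁ / |p₁|) - |A₂| * (p₂ / |p₂|)))
      ≤ c * |p₁ - p₂| * |A₁ - A₂| := by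
  have h3 : |(|A₁| - |A₂|)| ≤ |A₁ - A₂| := abs_abs_sub_abs_le_abs_sub _ _
  have h4 : |(p₁ - p₂) * (|A₁| - |A₂|)| ≤ |p₁ - p₂| * |A₁ - A₂| := by
    rw [abs_mul]; gcongr
  have h5 := abs_nonneg A₁
  have h6 := abs_nonneg A₂
  have h7 := abs_nonneg (p₁ - p₂)
  have h8 := le_abs_self ((p₁ - p₂) * (|A₁| - |A₂|))
  have h9 := neg_abs_le ((p₁ - p₂) * (|A₁| - |A₂|))
  have h10 : 0 ≤ c * |p₁ - p₂| * |A₁ - A₂| := by positivity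
  rcases h₁.lt_or_gt with hp1 | hp1 <;> rcases h₂.lt_or_gt with hp2 | hp2
  · rw [abs_of_neg hp1, abs_of_neg hp2, div_neg, div_self h₁, div_neg, div_self h₂]
    nlinarith
  · rw [abs_of_neg hp1, abs_of_pos hp2, div_neg, div_self h₁, div_self h₂]
    nlinarith [mul_nonneg (mul_nonneg hc (by linarith : (0:ℝ) ≤ p₂ - p₁)) (by positivity : (0:ℝ) ≤ |A₁| + |A₂|)]
  · rw [abs_of_pos hp1, abs_of_neg hp2, div_self h₁, div_neg, div_self h₂]
    nlinarith [mul_nonneg (mul_nonneg hc (by linarith : (0:ℝ) ≤ p₁ - p₂)) (by positivity : (0:ℝ) ≤ |A₁| + |A₂|)]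
  · rw [abs_of_pos hp1, abs_of_pos hp2, div_self h₁, div_self h₂]
    nlinarith

/-- **One-sided Lipschitz estimate for the pendulum with dry friction.** On any bounded
region of `(q, p, t)`-space there is a constant `L` such that for all points with
`p₁ ≠ 0`, `p₂ ≠ 0` and equal times,
`((q₁, p₁) − (q₂, p₂))·(f (q₁, p₁, t) − f (q₂, p₂, t)) ≤ L·|(q₁, p₁) − (q₂, p₂)|²`. -/
theorem stmt5 (l g μ : ℝ) (hl : 0 < l) (hg : 0 < g) (hμ : 0 < μ)
    (a : ℝ → ℝ) (K : NNReal) (ha : LipschitzWith K a)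
    (G : Set (ℝ × ℝ × ℝ)) (hG : Bornology.IsBounded G) :
    ∃ L : ℝ, ∀ q₁ p₁ q₂ p₂ t : ℝ,
      (q₁, p₁, t) ∈ G → (q₂, p₂, t) ∈ G → p₁ ≠ 0 → p₂ ≠ 0 →
      (q₁ - q₂) * ((pendf l g μ a q₁ p₁ t).1 - (pendf l g μ a q₂ p₂ t).1)
          + (p₁ - p₂) * ((pendf l g μ a q₁ p₁ t).2 - (pendf l g μ a q₂ p₂ t).2)
        ≤ L * ((q₁ - q₂) ^ 2 + (p₁ - p₂) ^ 2) := by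
  obtain ⟨r, hr⟩ := hG.subset_closedBall 0
  set M : ℝ := max r 0 with hM
  have hM0 : 0 ≤ M := le_max_right _ _
  have hrM : r ≤ M := le_max_left _ _
  set Ma : ℝ := K * M + |a 0| with hMa
  have hMa0 : 0 ≤ Ma := by positivity
  set C : ℝ := Ma + 2 * l * M + g with hC
  have hC0 : 0 ≤ C := by positivity
  clear_value M Ma C
  set c₁ : ℝ := Ma / l with hc₁
  set c₂ : ℝ := g / l with hc₂
  set c₃ : ℝ := μ * C / l with hc₃
  have hc₁0 : 0 ≤ c₁ := by positivity
  have hc₂0 : 0 ≤ c₂ := by positivity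
  have hc₃0 : 0 ≤ c₃ := by positivity
  clear_value c₁ c₂ c₃
  refine ⟨1 + c₁ + c₂ + 2 * c₃, ?_⟩
  intro q₁ p₁ q₂ p₂ t hm₁ hm₂ hp₁ hp₂
  -- bounds on the region
  have hb₁ : ‖((q₁, p₁, t) : ℝ × ℝ × ℝ)‖ ≤ M :=
    le_trans (mem_closedBall_zero_iff.mp (hr hm₁)) hrM
  have hb₂ : ‖((q₂, p₂, t) : ℝ × ℝ × ℝ)‖ ≤ M :=
    le_trans (mem_closedBall_zero_iff.mp (hr hm₂)) hrM
  have hp1M : |p₁| ≤ M := by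
    have := le_trans (norm_fst_le ((p₁, t) : ℝ × ℝ))
      (le_trans (norm_snd_le ((q₁, p₁, t) : ℝ × ℝ × ℝ)) hb₁)
    simpa [Real.norm_eq_abs] using this
  have hp2M : |p₂| ≤ M := by
    have := le_trans (norm_fst_le ((p₂, t) : ℝ × ℝ))
      (le_trans (norm_snd_le ((q₂, p₂, t) : ℝ × ℝ × ℝ)) hb₂)
    simpa [Real.norm_eq_abs] using this
  have htM : |t| ≤ M := by
    have := le_trans (norm_snd_le ((p₁, t) : ℝ × ℝ))
      (le_trans (norm_snd_le ((q₁, p₁, t) : ℝ × ℝ × ℝ)) hb₁)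
    simpa [Real.norm_eq_abs] using this
  have haM : |a t| ≤ Ma := by
    have h1 : dist (a t) (a 0) ≤ K * dist t 0 := ha.dist_le_mul t 0
    rw [Real.dist_eq, Real.dist_eq, sub_zero] at h1
    have h2 : |a t| - |a 0| ≤ |a t - a 0| := abs_sub_abs_le_abs_sub _ _
    have h3 : (K : ℝ) * |t| ≤ K * M :=
      mul_le_mul_of_nonneg_left htM K.coe_nonneg
    rw [hMa]; linarith
  -- notation
  set u : ℝ := q₁ - q₂ with hu
  set v : ℝ := p₁ - p₂ with hv
  set A₁ : ℝ := a t * Real.cos q₁ - l * p₁ ^ 2 + g * Real.sin q₁ with hA₁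
  set A₂ : ℝ := a t * Real.cos q₂ - l * p₂ ^ 2 + g * Real.sin q₂ with hA₂
  clear_value u v A₁ A₂
  -- trig Lipschitz bounds
  have hsin : |Real.sin q₁ - Real.sin q₂| ≤ |u| := hu ▸ sin_lip q₁ q₂
  have hcos : |Real.cos q₁ - Real.cos q₂| ≤ |u| := hu ▸ cos_lip q₁ q₂
  -- bound on |A₁ - A₂|
  have hAd : |A₁ - A₂| ≤ C * (|u| + |v|) := by
    have e0 : A₁ - A₂ = a t * (Real.cos q₁ - Real.cos q₂) - l * ((p₁ + p₂) * v)
        + g * (Real.sin q₁ - Real.sin q₂) := by rw [hA₁, hA₂, hv]; ring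
    have e1 : |a t * (Real.cos q₁ - Real.cos q₂)| ≤ Ma * |u| := by
      rw [abs_mul]; exact mul_le_mul haM hcos (abs_nonneg _) hMa0
    have e2 : |l * ((p₁ + p₂) * v)| ≤ 2 * l * M * |v| := by
      rw [abs_mul, abs_mul, abs_of_pos hl]
      have h2M : |p₁ + p₂| ≤ 2 * M := le_trans (abs_add_le _ _) (by linarith)
      calc l * (|p₁ + p₂| * |v|) ≤ l * ((2 * M) * |v|) := by gcongr
        _ = 2 * l * M * |v| := by ring
    have e3 : |g * (Real.sin q₁ - Real.sin q₂)| ≤ g * |u| := by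
      rw [abs_mul, abs_of_pos hg]
      exact mul_le_mul_of_nonneg_left hsin hg.le
    have e4 : |A₁ - A₂| ≤ Ma * |u| + 2 * l * M * |v| + g * |u| :=
      calc |A₁ - A₂| ≤ |a t * (Real.cos q₁ - Real.cos q₂) - l * ((p₁ + p₂) * v)|
            + |g * (Real.sin q₁ - Real.sin q₂)| := by rw [e0]; exact abs_add_le _ _
        _ ≤ |a t * (Real.cos q₁ - Real.cos q₂)| + |l * ((p₁ + p₂) * v)|
            + |g * (Real.sin q₁ - Real.sin q₂)| := by gcongr; exact abs_sub _ _
        _ ≤ Ma * |u| + 2 * l * M * |v| + g * |u| := by linarith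
    rw [hC]
    have f1 : 0 ≤ Ma * |v| := mul_nonneg hMa0 (abs_nonneg v)
    have f2 : 0 ≤ 2 * l * M * |u| :=
      mul_nonneg (mul_nonneg (mul_nonneg (by norm_num : (0:ℝ) ≤ 2) hl.le) hM0) (abs_nonneg u)
    have f3 : 0 ≤ g * |v| := mul_nonneg hg.le (abs_nonneg v)
    linarith [e4, f1, f2, f3]
  -- decompose the left-hand side
  have key : u * ((pendf l g μ a q₁ p₁ t).1 - (pendf l g μ a q₂ p₂ t).1)
      + v * ((pendf l g μ a q₁ p₁ t).2 - (pendf l g μ a q₂ p₂ t).2)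
      = u * v + (a t / l) * (v * (Real.sin q₁ - Real.sin q₂))
        - (g / l) * (v * (Real.cos q₁ - Real.cos q₂))
        + -((μ / l) * (p₁ - p₂) * (|A₁| * (p₁ / |p₁|) - |A₂| * (p₂ / |p₂|))) := by
    simp only [pendf, hRHS]
    rw [hu, hv, hA₁, hA₂]
    ring
  rw [key]
  -- bound each piece
  have B1 : u * v ≤ |u| * |v| := by
    calc u * v ≤ |u * v| := le_abs_self _
      _ = |u| * |v| := abs_mul _ _
  have hal : |a t / l| ≤ Ma / l := by
    rw [abs_div, abs_of_pos hl]; gcongr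
  have B2 : (a t / l) * (v * (Real.sin q₁ - Real.sin q₂)) ≤ c₁ * (|v| * |u|) := by
    calc (a t / l) * (v * (Real.sin q₁ - Real.sin q₂))
        ≤ |(a t / l) * (v * (Real.sin q₁ - Real.sin q₂))| := le_abs_self _
      _ = |a t / l| * (|v| * |Real.sin q₁ - Real.sin q₂|) := by rw [abs_mul, abs_mul]
      _ ≤ (Ma / l) * (|v| * |u|) := by gcongr
      _ = c₁ * (|v| * |u|) := by rw [hc₁]
  have B3 : -((g / l) * (v * (Real.cos q₁ - Real.cos q₂))) ≤ c₂ * (|v| * |u|) := by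
    calc -((g / l) * (v * (Real.cos q₁ - Real.cos q₂)))
        ≤ |(g / l) * (v * (Real.cos q₁ - Real.cos q₂))| := neg_le_abs _
      _ = |g / l| * (|v| * |Real.cos q₁ - Real.cos q₂|) := by rw [abs_mul, abs_mul]
      _ = (g / l) * (|v| * |Real.cos q₁ - Real.cos q₂|) := by
          rw [abs_of_pos (by positivity : (0:ℝ) < g / l)]
      _ ≤ (g / l) * (|v| * |u|) := by gcongr
      _ = c₂ * (|v| * |u|) := by rw [hc₂]
  have B4 : -((μ / l) * (p₁ - p₂) * (|A₁| * (p₁ / |p₁|) - |A₂| * (p₂ / |p₂|)))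
      ≤ (μ / l) * (|v| * (C * (|u| + |v|))) := by
    calc -((μ / l) * (p₁ - p₂) * (|A₁| * (p₁ / |p₁|) - |A₂| * (p₂ / |p₂|)))
        ≤ (μ / l) * |p₁ - p₂| * |A₁ - A₂| :=
          friction_key (μ / l) A₁ A₂ p₁ p₂ (by positivity) hp₁ hp₂
      _ = (μ / l) * (|v| * |A₁ - A₂|) := by rw [hv]; ring
      _ ≤ (μ / l) * (|v| * (C * (|u| + |v|))) := by gcongr
  have hsum : u * v + (a t / l) * (v * (Real.sin q₁ - Real.sin q₂))
      - (g / l) * (v * (Real.cos q₁ - Real.cos q₂))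
      + -((μ / l) * (p₁ - p₂) * (|A₁| * (p₁ / |p₁|) - |A₂| * (p₂ / |p₂|)))
      ≤ |u| * |v| + c₁ * (|v| * |u|) + c₂ * (|v| * |u|)
        + (μ / l) * (|v| * (C * (|u| + |v|))) := by linarith
  refine le_trans hsum ?_
  have h1 : 0 ≤ c₁ := hc₁0
  have h2 : 0 ≤ c₂ := hc₂0
  have h3 : 0 ≤ c₃ := hc₃0
  have h5 : 2 * (|u| * |v|) ≤ u ^ 2 + v ^ 2 := by
    have := sq_nonneg (|u| - |v|)
    have hu2 := sq_abs u
    have hv2 := sq_abs v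
    linarith [this, hu2, hv2]
  have h6 : |v| ^ 2 ≤ u ^ 2 + v ^ 2 := by
    have := sq_nonneg u
    have hv2 := sq_abs v
    linarith
  have hS : 0 ≤ u ^ 2 + v ^ 2 := by positivity
  have hP1 := mul_le_mul_of_nonneg_left h5 h1
  have hP2 := mul_le_mul_of_nonneg_left h5 h2
  have hP3 := mul_le_mul_of_nonneg_left h5 h3
  have hP4 := mul_le_mul_of_nonneg_left h6 h3
  have hQ1 := mul_nonneg h1 hS
  have hQ2 := mul_nonneg h2 hS
  have hQ3 := mul_nonneg h3 hS
  have hE : (μ / l) * (|v| * (C * (|u| + |v|)))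
      = c₃ * (|u| * |v|) + c₃ * |v| ^ 2 := by rw [hc₃]; ring
  rw [hE]
  linarith
end
end

section
/- Fix constants l > 0, g > 0, μ > 0 and a Lipschitz continuous function a : ℝ → ℝ. Then the pendulum set-valued map Φ is upper semicontinuous at every point (q,p,t) ∈ ℝ³: β(Φ(q',p',t'), Φ(q,p,t)) → 0 as (q',p',t') → (q,p,t), where β(A,B) = sup_{a∈A} inf_{b∈B} |a−b|. -/
/-!
`Φ (q, p, t)` is the image of the set `S p` of admissible friction directions (`{p / |p|}` or
`[-1, 1]`) under `s ↦ (p, h (q, p, t, s))`, which is jointly continuous in `(q, p, t, s)`.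
The sets `S p` are compact and `S p' ⊆ S p` for `p'` near `p`; by compactness, `h (q', p', t', s)`
is close to `h (q, p, t, s)` uniformly in `s ∈ S p`, so every point of `Φ (q', p', t')` is close
to the point of `Φ (q, p, t)` with the same `s`.
-/

open MeasureTheory Set Filter

noncomputable section

open Topology

theorem eventually_forall_mem_image_infDist_lt {X Y Z : Type*} [TopologicalSpace X]
    [TopologicalSpace Y] [PseudoMetricSpace Z] {F : X → Y → Z} {S : X → Set Y} {x₀ : X}
    (hF : Continuous (Function.uncurry F)) (hS₀ : IsCompact (S x₀))
    (hS : ∀ᶠ x in 𝓝 x₀, S x ⊆ S x₀) {ε : ℝ} (hε : 0 < ε) :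
    ∀ᶠ x in 𝓝 x₀, ∀ w ∈ F x '' S x, Metric.infDist w (F x₀ '' S x₀) < ε := by
  obtain ⟨V, hV, hFV⟩ := hS₀.mem_uniformity_of_prod hF.continuousOn (mem_univ x₀)
    (Metric.dist_mem_uniformity hε)
  rw [nhdsWithin_univ] at hV
  filter_upwards [hV, hS] with x hx hSx
  rintro _ ⟨s, hs, rfl⟩
  exact (Metric.infDist_le_dist_of_mem (mem_image_of_mem _ (hSx hs))).trans_lt
    (hFV x hx s (hSx hs))

/-- The admissible directions `s` of the friction force at angular velocity `p`. -/
def frictionSet (p : ℝ) : Set ℝ :=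
  if p ≠ 0 then {p / |p|} else Icc (-1) 1

lemma isCompact_frictionSet (p : ℝ) : IsCompact (frictionSet p) := by
  unfold frictionSet
  split_ifs
  exacts [isCompact_singleton, isCompact_Icc]

lemma frictionSet_zero : frictionSet 0 = Icc (-1) 1 := by
  simp [frictionSet]

lemma eventually_frictionSet_subset (p : ℝ) :
    ∀ᶠ p' in 𝓝 p, frictionSet p' ⊆ frictionSet p := by
  rcases lt_trichotomy p 0 with hp | rfl | hp
  · filter_upwards [eventually_lt_nhds hp] with p' hp'
    simp [frictionSet, hp.ne, hp'.ne, abs_of_neg, hp, hp']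
  · refine Eventually.of_forall fun p' => ?_
    rw [frictionSet_zero]
    unfold frictionSet
    split_ifs with hp'
    · rw [singleton_subset_iff, mem_Icc, ← abs_le, abs_div, abs_abs,
        div_self (abs_ne_zero.mpr hp')]
    · exact Subset.rfl
  · filter_upwards [eventually_gt_nhds hp] with p' hp'
    simp [frictionSet, hp.ne', hp'.ne', abs_of_pos, hp, hp']

lemma Phi_eq_image (l g μ : ℝ) (a : ℝ → ℝ) (q p t : ℝ) :
    Phi l g μ a q p t = (fun s => (p, hRHS l g μ a q p t s)) '' frictionSet p := by
  unfold Phi frictionSet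
  split_ifs with hp
  · rw [image_singleton]
  · obtain rfl := not_not.mp hp
    ext v
    simp [eq_comm]

theorem stmt7_general (l g μ : ℝ)
    (a : ℝ → ℝ) (K : NNReal) (ha : LipschitzWith K a) :
    ∀ q p t : ℝ, ∀ ε > 0, ∃ δ > 0, ∀ q' p' t' : ℝ,
      |q' - q| < δ → |p' - p| < δ → |t' - t| < δ →
      ∀ w ∈ Phi l g μ a q' p' t', Metric.infDist w (Phi l g μ a q p t) < ε := by
  intro q p t ε hε
  have hF : Continuous (Function.uncurry fun (x : ℝ × ℝ × ℝ) (s : ℝ) =>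
      (x.2.1, hRHS l g μ a x.1 x.2.1 x.2.2 s)) := by
    have := ha.continuous
    unfold hRHS Function.uncurry
    fun_prop
  have hS : ∀ᶠ x : ℝ × ℝ × ℝ in 𝓝 (q, p, t), frictionSet x.2.1 ⊆ frictionSet p :=
    (continuous_snd.fst.tendsto (q, p, t)).eventually (eventually_frictionSet_subset p)
  obtain ⟨δ, hδ, hPhi⟩ := Metric.eventually_nhds_iff.mp
    (eventually_forall_mem_image_infDist_lt (S := fun x : ℝ × ℝ × ℝ => frictionSet x.2.1) hF
      (isCompact_frictionSet p) hS hε)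
  refine ⟨δ, hδ, fun q' p' t' hq hp ht w hw => ?_⟩
  rw [Phi_eq_image] at hw ⊢
  exact @hPhi (q', p', t') (by simpa [Prod.dist_eq, Real.dist_eq] using ⟨hq, hp, ht⟩) w hw

/-- **Upper semicontinuity of the pendulum set-valued map.** At every point `(q, p, t)`,
the one-sided Hausdorff excess
`β(Φ (q', p', t'), Φ (q, p, t)) = sup_{w ∈ Φ (q', p', t')} dist (w, Φ (q, p, t))`
tends to `0` as `(q', p', t') → (q, p, t)`. -/
theorem stmt7 (l g μ : ℝ) (hl : 0 < l) (hg : 0 < g) (hμ : 0 < μ)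
    (a : ℝ → ℝ) (K : NNReal) (ha : LipschitzWith K a) :
    ∀ q p t : ℝ, ∀ ε > 0, ∃ δ > 0, ∀ q' p' t' : ℝ,
      |q' - q| < δ → |p' - p| < δ → |t' - t| < δ →
      ∀ w ∈ Phi l g μ a q' p' t', Metric.infDist w (Phi l g μ a q p t) < ε :=
  stmt7_general l g μ a K ha
end
end

section
/- Fix constants l > 0, g > 0, μ > 0, a Lipschitz continuous function a : ℝ → ℝ, and t₀ ≤ t₁. Set p*² = (g + max_{t∈[t₀,t₁]} |a(t)|)·(1 + 1/μ)·(1/l). Then for every t ∈ [t₀,t₁], every q ∈ ℝ and every p with p > 0 and p² > p*², every element (v₁,v₂) of Φ(q,p,t) satisfies v₂ < 0; and for every p with p < 0 and p² > p*², every element (v₁,v₂) of Φ(q,p,t) satisfies v₂ > 0. -/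
open MeasureTheory Set Filter

noncomputable section

/-!
Away from `p = 0` the map `Φ` is single-valued, with the friction acting against the motion.
Writing `N = a·cos q + g·sin q` (the normal-force term) and `T = a·sin q − g·cos q` (the
tangential term), one has `l·h = T − μ·|N − l p²|·sign p`. Both `|N|` and `|T|` are at most
`B = g + max |a|`, and `l p² > B (1 + 1/μ)` forces `μ |N − l p²| ≥ μ (l p² − B) > B ≥ |T|`:
for fast rotations friction dominates and the angular velocity decelerates.
-/

lemma abs_mul_sin_add_mul_cos_le (x y q : ℝ) :
    |x * Real.sin q + y * Real.cos q| ≤ |x| + |y| :=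
  calc |x * Real.sin q + y * Real.cos q|
      ≤ |x| * |Real.sin q| + |y| * |Real.cos q| := by
        simpa only [abs_mul] using abs_add_le (x * Real.sin q) (y * Real.cos q)
    _ ≤ |x| * 1 + |y| * 1 := by
        gcongr
        exacts [Real.abs_sin_le_one q, Real.abs_cos_le_one q]
    _ = |x| + |y| := by ring

lemma abs_lt_mul_abs_sub_of_lt {T N B L μ : ℝ} (hμ : 0 < μ) (hT : |T| ≤ B) (hN : N ≤ B)
    (hL : B * (1 + 1 / μ) < L) : |T| < μ * |N - L| := by
  have hB : 0 ≤ B := (abs_nonneg T).trans hT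
  have hBL : B < L := by nlinarith [one_div_pos.mpr hμ]
  have hexpand : μ * (B * (1 + 1 / μ)) = μ * B + B := by field_simp
  calc |T| ≤ B := hT
    _ < μ * (L - B) := by nlinarith
    _ ≤ μ * |N - L| := by
        gcongr
        rw [abs_sub_comm]
        exact (sub_le_sub_left hN L).trans (le_abs_self _)

lemma hRHS_eq (l g μ : ℝ) (a : ℝ → ℝ) (q p t s : ℝ) (hl : l ≠ 0) :
    hRHS l g μ a q p t s =
      (a t * Real.sin q + -g * Real.cos q
        - μ * |(a t * Real.cos q + g * Real.sin q) - l * p ^ 2| * s) / l := by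
  rw [hRHS, show a t * Real.cos q - l * p ^ 2 + g * Real.sin q
    = (a t * Real.cos q + g * Real.sin q) - l * p ^ 2 by ring]
  field_simp
  ring

lemma Phi_of_pos {l g μ : ℝ} {a : ℝ → ℝ} {q p t : ℝ} (hp : 0 < p) :
    Phi l g μ a q p t = {(p, hRHS l g μ a q p t 1)} := by
  rw [Phi, if_pos hp.ne', abs_of_pos hp, div_self hp.ne']

lemma Phi_of_neg {l g μ : ℝ} {a : ℝ → ℝ} {q p t : ℝ} (hp : p < 0) :
    Phi l g μ a q p t = {(p, hRHS l g μ a q p t (-1))} := by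
  rw [Phi, if_pos hp.ne, abs_of_neg hp, div_neg, div_self hp.ne]

lemma abs_le_sSup_abs_image_Icc {a : ℝ → ℝ} (ha : Continuous a) {t₀ t₁ t : ℝ}
    (ht : t ∈ Icc t₀ t₁) : |a t| ≤ sSup ((fun t => |a t|) '' Icc t₀ t₁) :=
  le_csSup (isCompact_Icc.bddAbove_image ha.abs.continuousOn) ⟨t, ht, rfl⟩

theorem stmt8_general (l g μ : ℝ) (hl : 0 < l) (hg : 0 < g) (hμ : 0 < μ)
    (a : ℝ → ℝ) (K : NNReal) (ha : LipschitzWith K a)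
    (t₀ t₁ : ℝ)
    (pstarSq : ℝ)
    (hpstar : pstarSq = (g + sSup ((fun t => |a t|) '' Set.Icc t₀ t₁)) * (1 + 1 / μ) * (1 / l)) :
    ∀ t ∈ Set.Icc t₀ t₁, ∀ q p : ℝ,
      (p > 0 → p ^ 2 > pstarSq → ∀ v ∈ Phi l g μ a q p t, v.2 < 0) ∧
      (p < 0 → p ^ 2 > pstarSq → ∀ v ∈ Phi l g μ a q p t, v.2 > 0) := by
  intro t ht q p
  set M := sSup ((fun t => |a t|) '' Icc t₀ t₁)
  have hM : |a t| ≤ M := abs_le_sSup_abs_image_Icc ha.continuous ht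
  have hT : |a t * Real.sin q + -g * Real.cos q| ≤ M + g := by
    have := abs_mul_sin_add_mul_cos_le (a t) (-g) q
    rw [abs_neg, abs_of_pos hg] at this
    linarith
  have hN : a t * Real.cos q + g * Real.sin q ≤ M + g := by
    have := abs_mul_sin_add_mul_cos_le g (a t) q
    rw [abs_of_pos hg] at this
    linarith [le_abs_self (g * Real.sin q + a t * Real.cos q)]
  have friction_dominates (hp2 : p ^ 2 > pstarSq) :
      |a t * Real.sin q + -g * Real.cos q|
        < μ * |(a t * Real.cos q + g * Real.sin q) - l * p ^ 2| := by
    refine abs_lt_mul_abs_sub_of_lt hμ hT hN ?_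
    rw [hpstar] at hp2
    calc (M + g) * (1 + 1 / μ) = l * ((g + M) * (1 + 1 / μ) * (1 / l)) := by field_simp; ring
      _ < l * p ^ 2 := by gcongr
  refine ⟨fun hp hp2 v hv => ?_, fun hp hp2 v hv => ?_⟩
  · rw [Phi_of_pos hp, mem_singleton_iff] at hv
    rw [hv, hRHS_eq _ _ _ _ _ _ _ _ hl.ne']
    have := (abs_lt.mp (friction_dominates hp2)).2
    exact div_neg_of_neg_of_pos (by linarith) hl
  · rw [Phi_of_neg hp, mem_singleton_iff] at hv
    rw [hv, hRHS_eq _ _ _ _ _ _ _ _ hl.ne']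
    have := (abs_lt.mp (friction_dominates hp2)).1
    exact div_pos (by linarith) hl

/-- **A priori bound on the angular velocity.** Set
`p*² = (g + max_{t ∈ [t₀, t₁]} |a t|)·(1 + 1/μ)·(1/l)`. For every `t ∈ [t₀, t₁]` and every
`q`, if `p > 0` and `p² > p*²` then every element of `Φ (q, p, t)` has negative second
component, and if `p < 0` and `p² > p*²` then every element of `Φ (q, p, t)` has positive
second component. -/
theorem stmt8 (l g μ : ℝ) (hl : 0 < l) (hg : 0 < g) (hμ : 0 < μ)
    (a : ℝ → ℝ) (K : NNReal) (ha : LipschitzWith K a)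
    (t₀ t₁ : ℝ) (ht : t₀ ≤ t₁)
    (pstarSq : ℝ)
    (hpstar : pstarSq = (g + sSup ((fun t => |a t|) '' Set.Icc t₀ t₁)) * (1 + 1 / μ) * (1 / l)) :
    ∀ t ∈ Set.Icc t₀ t₁, ∀ q p : ℝ,
      (p > 0 → p ^ 2 > pstarSq → ∀ v ∈ Phi l g μ a q p t, v.2 < 0) ∧
      (p < 0 → p ^ 2 > pstarSq → ∀ v ∈ Phi l g μ a q p t, v.2 > 0) :=
  stmt8_general l g μ hl hg hμ a K ha t₀ t₁ pstarSq hpstar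
end
end
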